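/- Let h, r, t be positive integers, σ : {1,…,r} → ℕ and τ : {1,…,t} → ℕ. Let s be the integral of σ, let u be the integral of τ, and let v be the integral of σ⋄τ. Put h' := rh + σ(1) + σ(2) + ⋯ + σ(r). Then, as subsets of ℤ, {ih + s(i) : 0 ≤ i ≤ r−1} + {jh' + u(j) : 0 ≤ j ≤ t−1} = {kh + v(k) : 0 ≤ k ≤ rt−1}. -/

import Mathlib

open Pointwise

/-- The map a⋄b : {1,…,rt} → ℕ: (a⋄b)(i) = a(j) if i ≡ j (mod r), 1 ≤ j < r,
and (a⋄b)(rk) = a(r) + b(k). -/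
def diamond (r : ℕ) (a b : ℕ → ℕ) : ℕ → ℕ := fun i =>
  if r ∣ i then a r + b (i / r) else a (i % r)

/-- The integral of σ : {1,…,r} → ℕ: s(0) = 0, s(i) = σ(1) + ⋯ + σ(i). -/
def integralOf (σ : ℕ → ℕ) : ℕ → ℕ := fun i => ∑ k ∈ Finset.Icc 1 i, σ k

/-! Writing `k = j * r + i` with `i < r`, the integral of `σ ⋄ τ` at `k` is
`j * (σ 1 + ⋯ + σ r) + u j + s i`, so `k ↦ (i, j)` matches the terms of the two sides. -/

@[simp]
lemma integralOf_zero (σ : ℕ → ℕ) : integralOf σ 0 = 0 := rfl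

lemma integralOf_succ (σ : ℕ → ℕ) (n : ℕ) :
    integralOf σ (n + 1) = integralOf σ n + σ (n + 1) :=
  Finset.sum_Icc_succ_top (Nat.succ_le_succ n.zero_le) σ

lemma diamond_mul (r : ℕ) (hr : 0 < r) (a b : ℕ → ℕ) (q : ℕ) :
    diamond r a b (q * r) = a r + b q := by
  simp [diamond, Nat.mul_div_cancel _ hr]

lemma diamond_mul_add_of_lt (r : ℕ) (a b : ℕ → ℕ) (q : ℕ) {i : ℕ} (hi : 0 < i)
    (hir : i < r) : diamond r a b (q * r + i) = a i := by
  have hmod : (q * r + i) % r = i := by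
    rw [Nat.mul_add_mod_self_right, Nat.mod_eq_of_lt hir]
  have hndvd : ¬ r ∣ q * r + i := by
    rw [Nat.dvd_iff_mod_eq_zero, hmod]; exact hi.ne'
  simp [diamond, hndvd, hmod]

lemma integralOf_diamond_mul_add (r : ℕ) (σ τ : ℕ → ℕ) (q : ℕ) {i : ℕ} (hi : i < r) :
    integralOf (diamond r σ τ) (q * r + i) =
      integralOf (diamond r σ τ) (q * r) + integralOf σ i := by
  induction i with
  | zero => simp
  | succ i ih =>
    rw [← add_assoc, integralOf_succ, ih (by omega), add_assoc (q * r) i 1,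
      diamond_mul_add_of_lt r σ τ q i.succ_pos hi, integralOf_succ, add_assoc]

lemma integralOf_diamond_mul (r : ℕ) (hr : 0 < r) (σ τ : ℕ → ℕ) (q : ℕ) :
    integralOf (diamond r σ τ) (q * r) = q * integralOf σ r + integralOf τ q := by
  induction q with
  | zero => simp
  | succ q ih =>
    obtain ⟨p, rfl⟩ : ∃ p, r = p + 1 := ⟨r - 1, by omega⟩
    have hsplit : (q + 1) * (p + 1) = q * (p + 1) + p + 1 := by ring
    rw [hsplit, integralOf_succ, integralOf_diamond_mul_add _ σ τ q p.lt_succ_self, ← hsplit,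
      diamond_mul _ hr, ih, integralOf_succ σ p, integralOf_succ τ q]
    ring

lemma integralOf_diamond (r : ℕ) (σ τ : ℕ → ℕ) (q : ℕ) {i : ℕ} (hi : i < r) :
    integralOf (diamond r σ τ) (q * r + i) =
      q * integralOf σ r + integralOf τ q + integralOf σ i := by
  rw [integralOf_diamond_mul_add r σ τ q hi, integralOf_diamond_mul r (by omega)]

lemma mul_add_add_integralOf_diamond (h r : ℕ) (σ τ : ℕ → ℕ) (q : ℕ) {i : ℕ} (hi : i < r) :
    (q * r + i) * h + integralOf (diamond r σ τ) (q * r + i) =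
      (i * h + integralOf σ i) + (q * (r * h + integralOf σ r) + integralOf τ q) := by
  rw [integralOf_diamond r σ τ q hi]
  ring

lemma range_mul_eq_image_product (r t : ℕ) :
    Finset.range (r * t) = (Finset.range r ×ˢ Finset.range t).image fun p => p.2 * r + p.1 := by
  ext k
  simp only [Finset.mem_range, Finset.mem_image, Finset.mem_product, Prod.exists]
  constructor
  · intro hk
    have hr : 0 < r := Nat.pos_of_mul_pos_right (k.zero_le.trans_lt hk)
    exact ⟨k % r, k / r, ⟨Nat.mod_lt k hr, Nat.div_lt_of_lt_mul hk⟩, Nat.div_add_mod' k r⟩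
  · rintro ⟨i, j, ⟨hi, hj⟩, rfl⟩
    nlinarith

theorem stmt13_general (h r t : ℕ)
    (σ τ : ℕ → ℕ) :
    ((Finset.range r).image fun i : ℕ => ((i * h + integralOf σ i : ℕ) : ℤ)) +
      ((Finset.range t).image fun j : ℕ =>
        ((j * (r * h + ∑ k ∈ Finset.Icc 1 r, σ k) + integralOf τ j : ℕ) : ℤ)) =
    (Finset.range (r * t)).image
      (fun k : ℕ => ((k * h + integralOf (diamond r σ τ) k : ℕ) : ℤ)) := by
  rw [← Finset.image_add_product, ← Finset.prodMap_image_product, Finset.image_image,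
    range_mul_eq_image_product, Finset.image_image]
  refine Finset.image_congr fun ⟨i, j⟩ hij => ?_
  have hi : i < r := Finset.mem_range.mp (Finset.mem_product.mp hij).1
  simp only [Function.comp_apply, Prod.map_apply, mul_add_add_integralOf_diamond h r σ τ j hi]
  exact (Nat.cast_add _ _).symm

theorem stmt13 (h r t : ℕ) (hh : 0 < h) (hr : 0 < r) (ht : 0 < t)
    (σ τ : ℕ → ℕ) :
    ((Finset.range r).image fun i : ℕ => ((i * h + integralOf σ i : ℕ) : ℤ)) +
      ((Finset.range t).image fun j : ℕ =>
        ((j * (r * h + ∑ k ∈ Finset.Icc 1 r, σ k) + integralOf τ j : ℕ) : ℤ)) =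
    (Finset.range (r * t)).image
      (fun k : ℕ => ((k * h + integralOf (diamond r σ τ) k : ℕ) : ℤ)) :=
  stmt13_general h r t σ τ
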